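/- arXiv:2601.21958 — 3 statements merged into one kernel-verified Lean document; each statement's English description precedes it below -/
import Mathlib

section
/- Let e > 0, r ≤ e+4, and a ≥ 1 be integers, and let m_1, ..., m_r be nonnegative integers satisfying a·e + 2a = m_1 + ... + m_r and a^2·e ≥ m_1^2 + ... + m_r^2. Then a contradiction follows; i.e., no such integers exist. -/
/-- arithmetic core of Proposition 3.4: for integers `e > 0`,
`r ≤ e + 4`, `a ≥ 1`, there exist no nonnegative integers `m₁, …, m_r` with
`a·e + 2·a = m₁ + ⋯ + m_r` and `a²·e ≥ m₁² + ⋯ + m_r²`. -/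
theorem stmt1 (e r a : ℕ) (he : 0 < e) (hr : r ≤ e + 4) (ha : 1 ≤ a)
    (m : Fin r → ℕ) (hsum : a * e + 2 * a = ∑ i, m i)
    (hsq : ∑ i, (m i) ^ 2 ≤ a ^ 2 * e) : False := by
  have hcs : (∑ i, m i) ^ 2 ≤ (Finset.univ.card : ℕ) * ∑ i, (m i) ^ 2 :=
    sq_sum_le_card_mul_sum_sq
  rw [Finset.card_univ, Fintype.card_fin] at hcs
  have h1 : (a * e + 2 * a) ^ 2 ≤ (e + 4) * (a ^ 2 * e) := by
    rw [hsum]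
    calc (∑ i, m i) ^ 2 ≤ r * ∑ i, (m i) ^ 2 := hcs
    _ ≤ (e + 4) * (a ^ 2 * e) := Nat.mul_le_mul hr hsq
  nlinarith [sq_nonneg a, sq_nonneg e]
end

section
/- Let D be a nef effective divisor on F_{e,r} (r ≤ e+4, e > 0) such that D - C̃_e is effective, where C̃_e is the strict transform of C_e. Suppose -K·D = 0. Writing D = C̃_e + D' with D' effective, nefness of D forces D'·C̃_e ≥ e, and then -K·D' = K·C̃_e = e - 2, while the nef class C' = H_e + (e+2)F_e - Σ E_i satisfies C'·D' ≤ -2 < 0, a contradiction. Hence -K·D ≥ 1. -/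
/-- Divisor classes `aH_e + bF_e + Σ cᵢEᵢ` on the blow-up `F_{e,r}` of the
Hirzebruch surface `F_e` at `r` (very general) points, recorded as `(a, b, c)`. -/
abbrev DivClass (r : ℕ) := ℤ × ℤ × (Fin r → ℤ)

/-- The intersection form on `Pic F_{e,r}`:
`H_e² = -e`, `H_e·F_e = 1`, `F_e² = 0`, `Eᵢ² = -1`, all other products zero. -/
def interF (e : ℤ) {r : ℕ} (D D' : DivClass r) : ℤ :=
  -e * D.1 * D'.1 + D.1 * D'.2.1 + D'.1 * D.2.1 - ∑ i, D.2.2 i * D'.2.2 i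

/-- The canonical class `K = -2H_e - (e+2)F_e + E₁ + ⋯ + E_r` of `F_{e,r}`. -/
def Kclass (e : ℤ) (r : ℕ) : DivClass r := (-2, -(e + 2), fun _ => 1)

/-- numerical core of Proposition 3.3: on `F_{e,r}` with `e > 0`,
`r ≤ e + 4`, let `C̃_e = H_e` and `C' = H_e + (e+2)F_e - ΣEᵢ`, and let
`D = C̃_e + D'` (i.e. `D - C̃_e = D'` is effective).  Assuming the relevant
nefness inequalities `D · C̃_e ≥ 0` (so `D' · C̃_e ≥ e`) and `C' · D' ≥ 0`,
one cannot have `-K · D = 0`; in fact `-K · D ≥ 1`. -/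
theorem stmt12 (e r : ℕ) (he : 0 < e) (hr : r ≤ e + 4) (D' : DivClass r)
    (Ct C' D : DivClass r)
    (hCt : Ct = ((1 : ℤ), (0 : ℤ), fun _ => (0 : ℤ)))
    (hC' : C' = ((1 : ℤ), ((e : ℤ) + 2), fun _ => (-1 : ℤ)))
    (hD : D = Ct + D')
    (hnefD : 0 ≤ interF (e : ℤ) D Ct)
    (hnefC' : 0 ≤ interF (e : ℤ) C' D') :
    1 ≤ interF (e : ℤ) (-(Kclass (e : ℤ) r)) D := by
  obtain ⟨a, b, c⟩ := D'
  subst hCt hC' hD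
  simp only [interF, Kclass, Prod.fst_add, Prod.snd_add, Prod.fst_neg, Prod.snd_neg,
    Pi.add_apply, Pi.neg_apply, neg_neg, mul_one, mul_zero, mul_neg, one_mul, neg_mul,
    Finset.sum_neg_distrib, Finset.sum_add_distrib, Finset.sum_const, Finset.card_univ,
    Fintype.card_fin, nsmul_eq_mul, zero_mul, sub_zero] at *
  have hev : (0:ℤ) < e := by exact_mod_cast he
  set S : ℤ := ∑ i : Fin r, c i with hS
  nlinarith [hnefD, hnefC', hev]
end

section
/- For e ≥ 2 and r ≤ e+4, there is no divisor class C = aH_e + bF_e - Σ m_i E_i on F_{e,r} with a ≥ 1, m_i ≥ 0, which is nef, satisfies C^2 ≥ 0, C·H_e = 0 (i.e., b = ae), and -K·C = 0. -/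
/-- for `e ≥ 2` and `r ≤ e + 4` there is no divisor class
`C = aH_e + bF_e - Σ mᵢEᵢ` on `F_{e,r}` with `a ≥ 1`, `mᵢ ≥ 0`, which satisfies
`C² ≥ 0`, `C · H_e = 0` (equivalently `b = ae`) and `-K · C = 0`. -/
theorem stmt17 (e r : ℕ) (he : 2 ≤ e) (hr : r ≤ e + 4)
    (a b : ℤ) (m : Fin r → ℤ) (C : DivClass r)
    (hC : C = (a, b, fun i => -m i)) (ha : 1 ≤ a) (hm : ∀ i, 0 ≤ m i)
    (hH : interF (e : ℤ) C (((1 : ℤ), (0 : ℤ), fun _ => (0 : ℤ)) : DivClass r) = 0)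
    (hK : interF (e : ℤ) (-(Kclass (e : ℤ) r)) C = 0)
    (hsq : 0 ≤ interF (e : ℤ) C C) : False := by
  subst hC
  have eq1 : b = a * e := by
    simp [interF] at hH; linarith
  have eq2 : a * (e + 2) = ∑ i, m i := by
    simp [interF, Kclass, Finset.mul_sum] at hK; linarith
  have eq3 : ∑ i, m i * m i ≤ (e : ℤ) * a ^ 2 := by
    simp [interF] at hsq; nlinarith
  have cs : (∑ i, m i) ^ 2 ≤ (r : ℤ) * ∑ i, m i ^ 2 := by
    have := sq_sum_le_card_mul_sum_sq (s := (Finset.univ : Finset (Fin r))) (f := m)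
    simpa using this
  have hsq' : ∑ i, m i ^ 2 = ∑ i, m i * m i := by
    apply Finset.sum_congr rfl; intro i _; ring
  rw [hsq', ← eq2] at cs
  have hre : (r : ℤ) ≤ (e : ℤ) + 4 := by exact_mod_cast hr
  have he' : (2 : ℤ) ≤ e := by exact_mod_cast he
  have hS : 0 ≤ ∑ i, m i * m i := Finset.sum_nonneg fun i _ => mul_nonneg (hm i) (hm i)
  nlinarith [sq_nonneg a, mul_le_mul_of_nonneg_right hre hS]
end
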